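/- Let D : [0,∞) → ℝ be continuous with D ≥ ε > 0, T_ℓ ≥ 0, and W : [0,∞) → [0,∞) continuous with W(T) ≤ K(1+T^α) for some K > 0 and α ∈ [0,1). Suppose in addition that T ↦ A(T) − W(T) is strictly increasing, where A(x) = ∫₀ˣ D. Then the scalar equation A(T⋆) = A(T_ℓ) + W(T⋆) has exactly one solution T⋆ ≥ T_ℓ, and consequently the boundary value problem T(u) = T_ℓ + W(T(1))∫₀ᵘ dv/D(T(v)) has exactly one mild solution. -/

import Mathlib

/-!
With `A` the primitive of `D`, a mild solution `T` satisfies `(A ∘ T)' = D(T) T' = W(T 1)`, hence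
`A (T u) = A Tl + W (T 1) u`; at `u = 1` this says that `T 1` is a root of `A T⋆ = A Tl + W T⋆`.
Conversely a root `T⋆` gives the mild solution `u ↦ A⁻¹ (A Tl + W T⋆ u)`, `A` being an increasing
bijection of `ℝ` because `D ≥ ε`. The root exists by the intermediate value theorem, since `A`
grows at least like `ε T` while `W` grows sublinearly, and it is unique because `A - W` is strictly
increasing.
-/

open Real MeasureTheory Set intervalIntegral

open Filter Asymptotics Function

theorem isLittleO_rpow_id_atTop {α : ℝ} (hα : α < 1) : (fun x : ℝ => x ^ α) =o[atTop] id := by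
  refine (isLittleO_iff_tendsto' ?_).2 ?_
  · filter_upwards [eventually_gt_atTop 0] with x hx hx0
    exact absurd hx0 hx.ne'
  refine (tendsto_rpow_neg_atTop (sub_pos.2 hα)).congr' ?_
  filter_upwards [eventually_gt_atTop 0] with x hx
  rw [neg_sub, rpow_sub_one hx.ne', id]

theorem eventually_add_mul_one_add_rpow_le {ε α : ℝ} (hε : 0 < ε) (hα : α < 1) (C K : ℝ) :
    ∀ᶠ x in atTop, C + K * (1 + x ^ α) ≤ ε * x := by
  have h : (fun x : ℝ => C + K * (1 + x ^ α)) =o[atTop] id := by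
    simp only [mul_add, mul_one, ← add_assoc]
    exact (isLittleO_const_id_atTop _).add ((isLittleO_rpow_id_atTop hα).const_mul_left K)
  filter_upwards [h.def hε, eventually_ge_atTop 0] with x hx hx0
  simpa [abs_of_nonneg hx0] using (le_abs_self _).trans hx

noncomputable def primitive (D : ℝ → ℝ) (x : ℝ) : ℝ := ∫ y in (0:ℝ)..x, D y

section Primitive

variable {D : ℝ → ℝ}

theorem primitive_zero : primitive D 0 = 0 := integral_same

theorem primitive_congr {D' : ℝ → ℝ} (h : EqOn D D' (Ici 0)) {x : ℝ} (hx : 0 ≤ x) :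
    primitive D x = primitive D' x :=
  integral_congr fun y hy => h (by rw [uIcc_of_le hx] at hy; exact hy.1)

variable (hD : Continuous D)
include hD

theorem hasDerivAt_primitive (x : ℝ) : HasDerivAt (primitive D) (D x) x :=
  (hD.integral_hasStrictDerivAt 0 x).hasDerivAt

theorem continuous_primitive : Continuous (primitive D) :=
  continuous_iff_continuousAt.2 fun x => (hasDerivAt_primitive hD x).continuousAt

theorem strictMono_primitive (hpos : ∀ y, 0 < D y) : StrictMono (primitive D) :=
  strictMono_of_deriv_pos fun x => (hasDerivAt_primitive hD x).deriv ▸ hpos x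

theorem mul_sub_le_primitive_sub {ε a b : ℝ} (hDε : ∀ y, ε ≤ D y) (hab : a ≤ b) :
    ε * (b - a) ≤ primitive D b - primitive D a := by
  rw [primitive, primitive, integral_interval_sub_left (hD.intervalIntegrable _ _)
    (hD.intervalIntegrable _ _)]
  calc ε * (b - a) = ∫ _ in a..b, ε := by simp [mul_comm]
    _ ≤ ∫ y in a..b, D y :=
      integral_mono_on hab intervalIntegrable_const (hD.intervalIntegrable _ _) fun y _ => hDε y

theorem surjective_primitive {ε : ℝ} (hε : 0 < ε) (hDε : ∀ y, ε ≤ D y) :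
    Surjective (primitive D) := by
  refine (continuous_primitive hD).surjective ?_ ?_
  · refine tendsto_atTop_mono' _ ?_ (tendsto_id.const_mul_atTop hε)
    filter_upwards [eventually_ge_atTop 0] with x hx
    simpa [primitive_zero] using mul_sub_le_primitive_sub hD hDε hx
  · refine tendsto_atBot_mono' _ ?_ (tendsto_id.const_mul_atBot hε)
    filter_upwards [eventually_le_atBot 0] with x hx
    simpa [primitive_zero] using mul_sub_le_primitive_sub hD hDε hx

end Primitive

theorem existsUnique_eq_add_of_sublinear {P W : ℝ → ℝ} {ε K α x₀ : ℝ} (hε : 0 < ε) (hα : α < 1)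
    (hx₀ : 0 ≤ x₀) (hP : ContinuousOn P (Ici 0)) (hPgrowth : ∀ x ≥ x₀, ε * (x - x₀) ≤ P x - P x₀)
    (hWc : ContinuousOn W (Ici 0)) (hWx₀ : 0 ≤ W x₀) (hW : ∀ x ≥ 0, W x ≤ K * (1 + x ^ α))
    (hmono : StrictMonoOn (fun x => P x - W x) (Ici 0)) :
    ∃! x, x₀ ≤ x ∧ P x = P x₀ + W x := by
  obtain ⟨M, hM, hx₀M⟩ :=
    ((eventually_add_mul_one_add_rpow_le hε hα (ε * x₀) K).and (eventually_ge_atTop x₀)).exists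
  have hPM : P x₀ ≤ P M - W M := by linarith [hPgrowth M hx₀M, hW M (hx₀.trans hx₀M)]
  obtain ⟨x, hx, hPx⟩ := intermediate_value_Icc hx₀M
    ((hP.sub hWc).mono fun y hy => hx₀.trans hy.1) ⟨by simpa using hWx₀, hPM⟩
  simp only [Pi.sub_apply] at hPx
  refine ⟨x, ⟨hx.1, by linarith⟩, fun y ⟨hy, hPy⟩ => hmono.injOn (hx₀.trans hy) (hx₀.trans hx.1) ?_⟩
  linarith

def IsMildSolution (D W : ℝ → ℝ) (Tl : ℝ) (T : ℝ → ℝ) : Prop :=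
  ContDiffOn ℝ 1 T (Icc 0 1) ∧ (∀ u ∈ Icc (0:ℝ) 1, 0 ≤ T u) ∧
    ∀ u ∈ Icc (0:ℝ) 1, T u = Tl + W (T 1) * ∫ v in (0:ℝ)..u, 1 / D (T v)

theorem isMildSolution_congr {D D' W T : ℝ → ℝ} {Tl : ℝ} (h : EqOn D D' (Ici 0)) :
    IsMildSolution D W Tl T ↔ IsMildSolution D' W Tl T := by
  refine and_congr_right fun _ => and_congr_right fun hT => forall₂_congr fun u hu => ?_
  rw [integral_congr fun v hv => ?_]
  rw [uIcc_of_le hu.1] at hv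
  rw [h (hT v ⟨hv.1, hv.2.trans hu.2⟩)]

section MildSolution

variable {D : ℝ → ℝ} (hD : Continuous D)
include hD

theorem primitive_comp_eq_of_isMildSolution {W T : ℝ → ℝ} {Tl : ℝ} (hpos : ∀ y, 0 < D y)
    (hT : IsMildSolution D W Tl T) :
    ∀ u ∈ Icc (0:ℝ) 1, primitive D (T u) = primitive D Tl + W (T 1) * u := by
  obtain ⟨hTc, -, hTeq⟩ := hT
  set w := W (T 1)
  -- `T` extended constantly outside `[0, 1]`, so that the right-hand side `F` is differentiable on `ℝ`
  set g : ℝ → ℝ := fun v => T (projIcc 0 1 zero_le_one v)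
  have hgc : Continuous g := hTc.continuousOn.comp_continuous
    (continuous_subtype_val.comp continuous_projIcc) fun v => (projIcc 0 1 _ v).2
  have hgT : EqOn g T (Icc 0 1) := fun v hv => by simp only [g, projIcc_of_mem _ hv]
  have hinv : Continuous fun v => 1 / D (g v) :=
    continuous_const.div (hD.comp hgc) fun v => (hpos _).ne'
  set F : ℝ → ℝ := fun u => Tl + w * ∫ v in (0:ℝ)..u, 1 / D (g v)
  have hF : ∀ u, HasDerivAt F (w * (1 / D (g u))) u := fun u =>
    ((hinv.integral_hasStrictDerivAt 0 u).hasDerivAt.const_mul w).const_add Tl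
  have hTF : EqOn T F (Icc 0 1) := fun u hu => by
    rw [hTeq u hu]
    refine congrArg (Tl + w * ·) (integral_congr fun v hv => ?_)
    rw [uIcc_of_le hu.1] at hv
    simp only [hgT ⟨hv.1, hv.2.trans hu.2⟩]
  have hH : ∀ u, HasDerivAt (fun u => primitive D (F u) - w * u)
      (D (F u) * (w * (1 / D (g u))) - w) u := fun u =>
    ((hasDerivAt_primitive hD (F u)).comp u (hF u)).sub (by simpa using (hasDerivAt_id u).const_mul w)
  have hconst := constant_of_has_deriv_right_zero (fun u _ => (hH u).continuousAt.continuousWithinAt)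
    fun u hu => by
      have hFg : F u = g u := by rw [← hTF (Ico_subset_Icc_self hu), hgT (Ico_subset_Icc_self hu)]
      have hzero : D (F u) * (w * (1 / D (g u))) - w = 0 := by
        rw [hFg]; field_simp [(hpos (g u)).ne']; ring
      exact (hzero ▸ hH u).hasDerivWithinAt
  intro u hu
  have h := hconst u hu
  simp only [F, integral_same, mul_zero, add_zero, sub_zero] at h
  rw [hTF hu]
  linarith

theorem eqOn_of_isMildSolution {W T T' : ℝ → ℝ} {Tl : ℝ} (hpos : ∀ y, 0 < D y)
    (hW0 : ∀ x ≥ 0, 0 ≤ W x) (hroot : ∃! Ts, Tl ≤ Ts ∧ primitive D Ts = primitive D Tl + W Ts)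
    (hT : IsMildSolution D W Tl T) (hT' : IsMildSolution D W Tl T') : EqOn T T' (Icc 0 1) := by
  have hroot_one : ∀ {S}, IsMildSolution D W Tl S →
      Tl ≤ S 1 ∧ primitive D (S 1) = primitive D Tl + W (S 1) := fun hS => by
    have h := primitive_comp_eq_of_isMildSolution hD hpos hS 1 ⟨zero_le_one, le_rfl⟩
    rw [mul_one] at h
    refine ⟨(strictMono_primitive hD hpos).le_iff_le.1 ?_, h⟩
    linarith [hW0 _ (hS.2.1 1 ⟨zero_le_one, le_rfl⟩)]
  have h1 : T 1 = T' 1 := hroot.unique (hroot_one hT) (hroot_one hT')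
  intro u hu
  apply (strictMono_primitive hD hpos).injective
  rw [primitive_comp_eq_of_isMildSolution hD hpos hT u hu,
    primitive_comp_eq_of_isMildSolution hD hpos hT' u hu, h1]

theorem eq_add_mul_integral_of_hasDerivAt {T : ℝ → ℝ} {c : ℝ} (hpos : ∀ y, 0 < D y)
    (hT : ∀ u, HasDerivAt T (c / D (T u)) u) (u : ℝ) :
    T u = T 0 + c * ∫ v in (0:ℝ)..u, 1 / D (T v) := by
  have hTc : Continuous T := continuous_iff_continuousAt.2 fun u => (hT u).continuousAt
  have hint := integral_eq_sub_of_hasDerivAt (fun v _ => hT v)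
    ((continuous_const.div (hD.comp hTc) fun v => (hpos _).ne').intervalIntegrable 0 u)
  simp only [← intervalIntegral.integral_const_mul, mul_one_div, hint]
  ring

theorem exists_isMildSolution {W : ℝ → ℝ} {ε Tl : ℝ} (hε : 0 < ε) (hDε : ∀ y, ε ≤ D y)
    (hTl : 0 ≤ Tl) (hW0 : ∀ x ≥ 0, 0 ≤ W x)
    (hroot : ∃ Ts, Tl ≤ Ts ∧ primitive D Ts = primitive D Tl + W Ts) :
    ∃ T, IsMildSolution D W Tl T := by
  obtain ⟨Ts, hTlTs, hTs⟩ := hroot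
  have hpos : ∀ y, 0 < D y := fun y => hε.trans_le (hDε y)
  set e := (strictMono_primitive hD hpos).orderIsoOfSurjective _ (surjective_primitive hD hε hDε)
  set c := W Ts
  have hc : 0 ≤ c := hW0 Ts (hTl.trans hTlTs)
  set T : ℝ → ℝ := fun u => e.symm (primitive D Tl + c * u)
  have hTe : ∀ u, primitive D (T u) = primitive D Tl + c * u := fun u => e.apply_symm_apply _
  have hT0 : T 0 = Tl := (strictMono_primitive hD hpos).injective (by rw [hTe]; ring)
  have hT1 : T 1 = Ts := (strictMono_primitive hD hpos).injective (by rw [hTe, hTs]; ring)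
  have hTmono : Monotone T := e.symm.monotone.comp ((monotone_id.const_mul hc).const_add _)
  have hTderiv : ∀ u, HasDerivAt T (c / D (T u)) u := fun u => by
    have hinv := HasDerivAt.of_local_left_inverse e.symm.continuous.continuousAt
      (hasDerivAt_primitive hD (T u)) (hpos _).ne' (Eventually.of_forall e.apply_symm_apply)
    rw [div_eq_inv_mul]
    exact hinv.comp u (by simpa using ((hasDerivAt_id u).const_mul c).const_add (primitive D Tl))
  refine ⟨T, ?_, fun u hu => hTl.trans (hT0.symm.trans_le (hTmono hu.1)), fun u _ => ?_⟩
  · have hTc : Continuous T := e.symm.continuous.comp (by fun_prop)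
    refine (contDiff_one_iff_deriv.2 ⟨fun u => (hTderiv u).differentiableAt, ?_⟩).contDiffOn
    rw [show deriv T = _ from funext fun u => (hTderiv u).deriv]
    exact continuous_const.div (hD.comp hTc) fun u => (hpos _).ne'
  · rw [hT1, ← hT0]
    exact eq_add_mul_integral_of_hasDerivAt hD hpos hTderiv u

end MildSolution

theorem stmt17_general (D W : ℝ → ℝ) (ε Tl K α : ℝ)
    (hε : 0 < ε) (hD : ContinuousOn D (Ici 0)) (hDε : ∀ y ≥ (0:ℝ), ε ≤ D y)
    (hTl : 0 ≤ Tl) (hα : α ∈ Ico (0:ℝ) 1)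
    (hWc : ContinuousOn W (Ici 0)) (hW0 : ∀ T ≥ (0:ℝ), 0 ≤ W T)
    (hW : ∀ T ≥ (0:ℝ), W T ≤ K * (1 + T ^ α))
    (hmono : StrictMonoOn (fun T => (∫ y in (0:ℝ)..T, D y) - W T) (Ici 0)) :
    let A : ℝ → ℝ := fun x => ∫ y in (0:ℝ)..x, D y
    let Mild : (ℝ → ℝ) → Prop := fun T =>
      ContDiffOn ℝ 1 T (Icc 0 1) ∧ (∀ u ∈ Icc (0:ℝ) 1, 0 ≤ T u) ∧
      ∀ u ∈ Icc (0:ℝ) 1, T u = Tl + W (T 1) * ∫ v in (0:ℝ)..u, 1 / D (T v)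
    (∃! Ts : ℝ, Tl ≤ Ts ∧ A Ts = A Tl + W Ts) ∧
    (∃ T : ℝ → ℝ, Mild T) ∧
    (∀ T T', Mild T → Mild T' → EqOn T T' (Icc 0 1)) := by
  intro A Mild
  -- `D` extended by `D 0` to the left: its primitive is a global increasing bijection
  set D' : ℝ → ℝ := fun y => D (max y 0)
  have hD'c : Continuous D' :=
    hD.comp_continuous (continuous_id.max continuous_const) fun y => le_max_right y 0
  have hD'ε : ∀ y, ε ≤ D' y := fun y => hDε _ (le_max_right y 0)
  have hD'pos : ∀ y, 0 < D' y := fun y => hε.trans_le (hD'ε y)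
  have hDD' : EqOn D D' (Ici 0) := fun y hy => by simp only [D', max_eq_left hy.out]
  have hA : ∀ {x}, 0 ≤ x → A x = primitive D' x := primitive_congr hDD'
  have hMild : ∀ T, Mild T ↔ IsMildSolution D' W Tl T := fun T => isMildSolution_congr hDD'
  have hroot : ∃! Ts, Tl ≤ Ts ∧ primitive D' Ts = primitive D' Tl + W Ts :=
    existsUnique_eq_add_of_sublinear hε hα.2 hTl (continuous_primitive hD'c).continuousOn
      (fun x hx => mul_sub_le_primitive_sub hD'c hD'ε hx) hWc (hW0 Tl hTl) hW
      (hmono.congr fun x hx => by simp only [← hA hx.out]; rfl)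
  refine ⟨(existsUnique_congr fun Ts => and_congr_right fun h => ?_).2 hroot, ?_, ?_⟩
  · rw [hA (hTl.trans h), hA hTl]
  · obtain ⟨T, hT⟩ := exists_isMildSolution hD'c hε hD'ε hTl hW0 hroot.exists
    exact ⟨T, (hMild T).2 hT⟩
  · exact fun T T' hT hT' =>
      eqOn_of_isMildSolution hD'c hD'pos hW0 hroot ((hMild T).1 hT) ((hMild T').1 hT')

theorem stmt17 (D W : ℝ → ℝ) (ε Tl K α : ℝ)
    (hε : 0 < ε) (hD : ContinuousOn D (Ici 0)) (hDε : ∀ y ≥ (0:ℝ), ε ≤ D y)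
    (hTl : 0 ≤ Tl) (hK : 0 < K) (hα : α ∈ Ico (0:ℝ) 1)
    (hWc : ContinuousOn W (Ici 0)) (hW0 : ∀ T ≥ (0:ℝ), 0 ≤ W T)
    (hW : ∀ T ≥ (0:ℝ), W T ≤ K * (1 + T ^ α))
    (hmono : StrictMonoOn (fun T => (∫ y in (0:ℝ)..T, D y) - W T) (Ici 0)) :
    let A : ℝ → ℝ := fun x => ∫ y in (0:ℝ)..x, D y
    let Mild : (ℝ → ℝ) → Prop := fun T =>
      ContDiffOn ℝ 1 T (Icc 0 1) ∧ (∀ u ∈ Icc (0:ℝ) 1, 0 ≤ T u) ∧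
      ∀ u ∈ Icc (0:ℝ) 1, T u = Tl + W (T 1) * ∫ v in (0:ℝ)..u, 1 / D (T v)
    (∃! Ts : ℝ, Tl ≤ Ts ∧ A Ts = A Tl + W Ts) ∧
    (∃ T : ℝ → ℝ, Mild T) ∧
    (∀ T T', Mild T → Mild T' → EqOn T T' (Icc 0 1)) :=
  stmt17_general D W ε Tl K α hε hD hDε hTl hα hWc hW0 hW hmono
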